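/- Fix b ≥ 1. Let G be an extended type-II gadget with designated vertices p, q, vertex r and paths P_1, P_2 as in the definition. Then: (1) for every vertex x ∈ V(G)∖{p,q}, there exists a ∈ {1,2} and an (a,b)-alternating-path R contained in G with t_a(R) = x, s_1(R) ∈ {p,q} and |V(R) ∩ {p,q}| = 1; (2) for every non-empty set X ⊆ V(P_1)∖{p,r}, there exists a ∈ {1,2} and an (a,b)-alternating-path R contained in G with t_a(R) ∈ X, s_1(R) ∈ {p,q}, |V(R) ∩ {p,q}| = 1 and |V(R) ∩ X| = 1. -/

import Mathlib

/- Common definitions: digraphs as irreflexive-in-intent relations `V → V → Prop`,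
   directed paths as nonempty duplicate-free lists of vertices,
   subdivisions, gadgets, alternating paths and chains, following
   "Subdivisions in digraphs of large out-degree or large dichromatic number". -/

namespace Paper

variable {V : Type*}

/-- `p` is a directed path in the digraph `D`: a nonempty list of pairwise distinct
vertices in which consecutive vertices are joined by an arc of `D`.
Its length (number of arcs) is `p.length - 1`. -/
def IsDipathList (D : V → V → Prop) (p : List V) : Prop :=
  p ≠ [] ∧ p.Nodup ∧ p.Chain' D

/-- The out-degree of a vertex. -/
noncomputable def outDeg (D : V → V → Prop) (v : V) : ℕ :=
  Set.ncard {w | D v w}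

/-- The digraph `D` contains a subdivision of the digraph `F`: there is an injective
embedding `φ` of the branch vertices and, for every arc `(x,y)` of `F`, a directed path
in `D` from `φ x` to `φ y` of length at least one, such that the internal vertices of
these paths avoid the branch vertices and the paths of distinct arcs are internally
vertex-disjoint. -/
def ContainsSubdivisionOf {W : Type*} (D : V → V → Prop) (F : W → W → Prop) : Prop :=
  ∃ (φ : W → V) (P : W → W → List V),
    Function.Injective φ ∧
    (∀ ⦃x y⦄, F x y → IsDipathList D (P x y) ∧ (P x y).head? = some (φ x) ∧
      (P x y).getLast? = some (φ y) ∧ 2 ≤ (P x y).length ∧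
      ∀ z ∈ (P x y).tail.dropLast, ∀ w, φ w ≠ z) ∧
    (∀ ⦃x y x' y'⦄, F x y → F x' y' → (x, y) ≠ (x', y') →
      ∀ z ∈ (P x y).tail.dropLast, z ∉ P x' y')

/-- As `ContainsSubdivisionOf`, but moreover the subdivision spans exactly
the vertex set `S`. -/
def SpansSubdivisionOf {W : Type*} (D : V → V → Prop) (S : Set V) (F : W → W → Prop) : Prop :=
  ∃ (φ : W → V) (P : W → W → List V),
    Function.Injective φ ∧
    (∀ ⦃x y⦄, F x y → IsDipathList D (P x y) ∧ (P x y).head? = some (φ x) ∧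
      (P x y).getLast? = some (φ y) ∧ 2 ≤ (P x y).length ∧
      ∀ z ∈ (P x y).tail.dropLast, ∀ w, φ w ≠ z) ∧
    (∀ ⦃x y x' y'⦄, F x y → F x' y' → (x, y) ≠ (x', y') →
      ∀ z ∈ (P x y).tail.dropLast, z ∉ P x' y') ∧
    S = Set.range φ ∪ {z | ∃ x y, F x y ∧ z ∈ P x y}

/-- The biorientation of the triangle minus one arc: vertices `0,1,2` and arcs
`(0,1),(1,0),(1,2),(2,1),(0,2)`. -/
def K3e : Fin 3 → Fin 3 → Prop := fun x y =>
  (x, y) = (0, 1) ∨ (x, y) = (1, 0) ∨ (x, y) = (1, 2) ∨ (x, y) = (2, 1) ∨ (x, y) = (0, 2)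

/-- The biorientation of the complete graph on four vertices. -/
def K4bi : Fin 4 → Fin 4 → Prop := fun x y => x ≠ y

/-- The biorientation of the star with four edges (center `0`). -/
def S4bi : Fin 5 → Fin 5 → Prop := fun x y => x ≠ y ∧ (x = 0 ∨ y = 0)

/-- The orientation of the cycle of length `ℓ` (vertex set `ZMod ℓ`) determined by
`σ`: the edge `{x, x+1}` is oriented from `x` to `x+1` if `σ x = true`, and from
`x+1` to `x` otherwise. -/
def CycleOrientation (ℓ : ℕ) (σ : ZMod ℓ → Bool) : ZMod ℓ → ZMod ℓ → Prop :=
  fun x y => (σ x = true ∧ y = x + 1) ∨ (σ y = false ∧ x = y + 1)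

/-- The oriented cycle `C_{a,b}` on `2ab` vertices: going around the cycle
`ZMod (2ab)`, the arcs of the `j`-th block of `b` consecutive edges are oriented
forwards for even `j` and backwards for odd `j`; its sources are `s_j = 2bj`
and its sinks are `t_j = 2bj + b`, joined by `2a` internally disjoint directed
paths of length `b` each. -/
def Cab (a b : ℕ) : ZMod (2 * a * b) → ZMod (2 * a * b) → Prop := fun x y =>
  ∃ i : ℕ, i < 2 * a * b ∧
    (((i / b) % 2 = 0 ∧ x = (i : ZMod (2 * a * b)) ∧ y = ((i + 1 : ℕ) : ZMod (2 * a * b))) ∨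
     ((i / b) % 2 = 1 ∧ x = ((i + 1 : ℕ) : ZMod (2 * a * b)) ∧ y = (i : ZMod (2 * a * b))))

/-- The directed girth of `D` is at least `g`: every directed cycle
(a nonempty duplicate-free list `v :: p` with consecutive arcs and an arc from the
last vertex back to `v`) has length at least `g`. -/
def DirGirthGE (D : V → V → Prop) (g : ℕ) : Prop :=
  ∀ (v : V) (p : List V), (v :: p).Nodup → List.Chain D v (p ++ [v]) → g ≤ p.length + 1

/-- `D` is strongly connected. -/
def StronglyConnected (D : V → V → Prop) : Prop :=
  ∀ u v : V, Relation.ReflTransGen D u v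

/-- `D` is strongly `k`-arc-connected: after deleting any set of at most `k-1` arcs,
the digraph remains strongly connected. -/
def StronglyArcConnected (D : V → V → Prop) (k : ℕ) : Prop :=
  ∀ E : Finset (V × V), E.card < k →
    StronglyConnected (fun u v => D u v ∧ (u, v) ∉ E)

/-- `x` and `y` are consecutive (in this order) in the list `l`. -/
def adjIn (l : List V) (x y : V) : Prop := ∃ l₁ l₂, l = l₁ ++ x :: y :: l₂

/-- A type-I gadget in `D`: a directed cycle `p, q, rest…` of length at least `g`
through the arc `(p,q)`. -/
structure TypeIGadget (D : V → V → Prop) (g : ℕ) where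
  p : V
  q : V
  rest : List V
  nodup : (p :: q :: rest).Nodup
  chain : List.Chain D p (q :: (rest ++ [p]))
  glen : g ≤ rest.length + 2

def TypeIGadget.verts {D : V → V → Prop} {g : ℕ} (G : TypeIGadget D g) : Set V :=
  {x | x ∈ G.p :: G.q :: G.rest}

def TypeIGadget.arcs {D : V → V → Prop} {g : ℕ} (G : TypeIGadget D g) : V → V → Prop :=
  adjIn (G.p :: G.q :: (G.rest ++ [G.p]))

/-- A basic type-II gadget in `D` (with girth parameter `b`): vertices `p, q, r` and a
directed path `P₁` from `r` to `p` of length at least `2b² + b - 2` avoiding `q`,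
all of whose vertices send an arc to `q`. -/
structure BasicIIGadget (D : V → V → Prop) (b : ℕ) where
  p : V
  q : V
  r : V
  P₁ : List V
  path₁ : IsDipathList D P₁
  first₁ : P₁.head? = some r
  last₁ : P₁.getLast? = some p
  len₁ : 2 * b ^ 2 + b - 1 ≤ P₁.length
  hq : q ∉ P₁
  toq : ∀ x ∈ P₁, D x q

def BasicIIGadget.verts {D : V → V → Prop} {b : ℕ} (G : BasicIIGadget D b) : Set V :=
  insert G.q {x | x ∈ G.P₁}

def BasicIIGadget.arcs {D : V → V → Prop} {b : ℕ} (G : BasicIIGadget D b) :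
    V → V → Prop :=
  fun x y => adjIn G.P₁ x y ∨ (x ∈ G.P₁ ∧ y = G.q)

/-- An extended type-II gadget: a basic type-II gadget together with a directed path
`P₂` of length at least `b` ending at `r`, meeting `P₁` only in `r` and avoiding `q`,
such that either the first vertex of `P₂` sends an arc to the second vertex of `P₁`,
or some vertex of `P₁` other than `r` sends an arc to the first vertex of `P₂`. -/
structure ExtIIGadget (D : V → V → Prop) (b : ℕ) where
  p : V
  q : V
  r : V
  P₁ : List V
  path₁ : IsDipathList D P₁
  first₁ : P₁.head? = some r
  last₁ : P₁.getLast? = some p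
  len₁ : 2 * b ^ 2 + b - 1 ≤ P₁.length
  hq : q ∉ P₁
  toq : ∀ x ∈ P₁, D x q
  P₂ : List V
  path₂ : IsDipathList D P₂
  last₂ : P₂.getLast? = some r
  len₂ : b + 1 ≤ P₂.length
  inter : ∀ x ∈ P₁, x ∈ P₂ → x = r
  hq₂ : q ∉ P₂
  extra : (∃ z y, P₂.head? = some z ∧ P₁[1]? = some y ∧ D z y) ∨
          (∃ w z, w ∈ P₁ ∧ w ≠ r ∧ P₂.head? = some z ∧ D w z)

def ExtIIGadget.verts {D : V → V → Prop} {b : ℕ} (G : ExtIIGadget D b) : Set V :=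
  insert G.q ({x | x ∈ G.P₁} ∪ {x | x ∈ G.P₂})

def ExtIIGadget.arcs {D : V → V → Prop} {b : ℕ} (G : ExtIIGadget D b) : V → V → Prop :=
  fun x y => adjIn G.P₁ x y ∨ (x ∈ G.P₁ ∧ y = G.q) ∨ adjIn G.P₂ x y ∨
    (D x y ∧ ((G.P₂.head? = some x ∧ G.P₁[1]? = some y) ∨
              (x ∈ G.P₁ ∧ x ≠ G.r ∧ G.P₂.head? = some y)))

/-- A type-III gadget: vertices `p, q, r`, the arc `(p,q)`, and two internally
vertex-disjoint directed paths `P₁ : p → r` and `P₂ : q → r`, each of length at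
least `2b - 1`. -/
structure TypeIIIGadget (D : V → V → Prop) (b : ℕ) where
  p : V
  q : V
  r : V
  arc : D p q
  P₁ : List V
  P₂ : List V
  path₁ : IsDipathList D P₁
  path₂ : IsDipathList D P₂
  first₁ : P₁.head? = some p
  first₂ : P₂.head? = some q
  last₁ : P₁.getLast? = some r
  last₂ : P₂.getLast? = some r
  len₁ : 2 * b ≤ P₁.length
  len₂ : 2 * b ≤ P₂.length
  inter : ∀ x ∈ P₁, x ∈ P₂ → x = r

def TypeIIIGadget.verts {D : V → V → Prop} {b : ℕ} (G : TypeIIIGadget D b) : Set V :=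
  {x | x ∈ G.P₁} ∪ {x | x ∈ G.P₂}

def TypeIIIGadget.arcs {D : V → V → Prop} {b : ℕ} (G : TypeIIIGadget D b) :
    V → V → Prop :=
  fun x y => (x = G.p ∧ y = G.q) ∨ adjIn G.P₁ x y ∨ adjIn G.P₂ x y

/-- A trivial gadget: just the arc `(p,q)`. -/
structure TrivGadget (D : V → V → Prop) where
  p : V
  q : V
  arc : D p q

def TrivGadget.verts {D : V → V → Prop} (G : TrivGadget D) : Set V := {G.p, G.q}

def TrivGadget.arcs {D : V → V → Prop} (G : TrivGadget D) : V → V → Prop :=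
  fun x y => x = G.p ∧ y = G.q

/-- An `(a,b)`-alternating path in `D` (with 0-based indexing): vertices
`s 0, …, s (a-1)`, `t 0, …, t (a-1)` and pairwise internally disjoint directed paths
`Q i : s i → t i` and `Q' i : s (i+1) → t i`, forming an oriented path; every `Q' i`
and every `Q i` with `0 < i < a - 1` has length at least `b` (`Q 0` and `Q (a-1)`
may even be single vertices). -/
structure AltPath (D : V → V → Prop) (a b : ℕ) where
  s : Fin a → V
  t : Fin a → V
  Q : Fin a → List V
  Q' : Fin (a - 1) → List V
  path_Q : ∀ i, IsDipathList D (Q i)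
  first_Q : ∀ i, (Q i).head? = some (s i)
  last_Q : ∀ i, (Q i).getLast? = some (t i)
  path_Q' : ∀ i, IsDipathList D (Q' i)
  first_Q' : ∀ i : Fin (a - 1),
    (Q' i).head? = some (s ⟨i.val + 1, by have := i.isLt; omega⟩)
  last_Q' : ∀ i : Fin (a - 1),
    (Q' i).getLast? = some (t ⟨i.val, by have := i.isLt; omega⟩)
  len_Q : ∀ i : Fin a, 0 < i.val → i.val < a - 1 → b + 1 ≤ (Q i).length
  len_Q' : ∀ i, b + 1 ≤ (Q' i).length
  disj_QQ : ∀ i j : Fin a, i ≠ j → ∀ x ∈ Q i, x ∉ Q j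
  disj_Q'Q' : ∀ i j : Fin (a - 1), i ≠ j → ∀ x ∈ Q' i, x ∉ Q' j
  disj_QQ' : ∀ (i : Fin a) (j : Fin (a - 1)), ∀ x ∈ Q i, x ∈ Q' j →
    (j.val = i.val ∧ x = t i) ∨ (i.val = j.val + 1 ∧ x = s i)

def AltPath.verts {D : V → V → Prop} {a b : ℕ} (R : AltPath D a b) : Set V :=
  {x | (∃ i, x ∈ R.Q i) ∨ (∃ i, x ∈ R.Q' i)}

/-- A strong alternating path: additionally `Q 0` and `Q (a-1)` (hence all `Q i`)
have length at least `b`. -/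
def AltPath.Strong {D : V → V → Prop} {a b : ℕ} (R : AltPath D a b) : Prop :=
  ∀ i, b + 1 ≤ (R.Q i).length

def AltPath.arcs {D : V → V → Prop} {a b : ℕ} (R : AltPath D a b) : V → V → Prop :=
  fun x y => (∃ i, adjIn (R.Q i) x y) ∨ (∃ i, adjIn (R.Q' i) x y)

/-- A gadget allowed in a chain: type I (with `g = 4b²`), basic type II, or type III. -/
inductive ChainGadget (D : V → V → Prop) (b : ℕ) where
  | I : TypeIGadget D (4 * b ^ 2) → ChainGadget D b
  | II : BasicIIGadget D b → ChainGadget D b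
  | III : TypeIIIGadget D b → ChainGadget D b

def ChainGadget.pp {D : V → V → Prop} {b : ℕ} : ChainGadget D b → V
  | .I G => G.p
  | .II G => G.p
  | .III G => G.p

def ChainGadget.qq {D : V → V → Prop} {b : ℕ} : ChainGadget D b → V
  | .I G => G.q
  | .II G => G.q
  | .III G => G.q

def ChainGadget.verts {D : V → V → Prop} {b : ℕ} : ChainGadget D b → Set V
  | .I G => G.verts
  | .II G => G.verts
  | .III G => G.verts

def ChainGadget.arcs {D : V → V → Prop} {b : ℕ} : ChainGadget D b → V → V → Prop
  | .I G => G.arcs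
  | .II G => G.arcs
  | .III G => G.arcs

/-- A chain in `D`: a directed path (spine) `v 0, …, v m`, a set `A2` of spine arcs,
and a gadget for every arc in `A2` (arcs outside `A2` form `A1` and carry trivial
gadgets), such that each gadget has the endpoints of its arc as designated vertices,
meets the spine only in these two vertices, and two distinct gadgets meet only in
spine vertices. -/
structure GChain (D : V → V → Prop) (b m : ℕ) where
  v : Fin (m + 1) → V
  inj : Function.Injective v
  spine : ∀ i : Fin m, D (v i.castSucc) (v i.succ)
  A2 : Finset (Fin m)
  gad : (i : Fin m) → i ∈ A2 → ChainGadget D b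
  hp : ∀ (i : Fin m) (hi : i ∈ A2), (gad i hi).pp = v i.castSucc
  hq : ∀ (i : Fin m) (hi : i ∈ A2), (gad i hi).qq = v i.succ
  hspine : ∀ (i : Fin m) (hi : i ∈ A2) (j : Fin (m + 1)),
    v j ∈ (gad i hi).verts → j = i.castSucc ∨ j = i.succ
  hdisj : ∀ (i : Fin m) (hi : i ∈ A2) (j : Fin m) (hj : j ∈ A2), i ≠ j →
    ∀ x, x ∈ (gad i hi).verts → x ∈ (gad j hj).verts → ∃ k, x = v k

def GChain.verts {D : V → V → Prop} {b m : ℕ} (C : GChain D b m) : Set V :=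
  Set.range C.v ∪ {x | ∃ (i : Fin m) (hi : i ∈ C.A2), x ∈ (C.gad i hi).verts}

def GChain.arcs {D : V → V → Prop} {b m : ℕ} (C : GChain D b m) : V → V → Prop :=
  fun x y => (∃ i : Fin m, x = C.v i.castSucc ∧ y = C.v i.succ) ∨
    (∃ (i : Fin m) (hi : i ∈ C.A2), (C.gad i hi).arcs x y)

/-- The vertex set of the gadget `G_e` sitting on the `i`-th spine arc
(the trivial gadget for arcs of `A1`). -/
def GChain.gadVerts {D : V → V → Prop} {b m : ℕ} (C : GChain D b m) (i : Fin m) :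
    Set V :=
  if h : i ∈ C.A2 then (C.gad i h).verts else {C.v i.castSucc, C.v i.succ}

/-- An arbitrary gadget: trivial, type I (with `g = 4b²`), basic or extended type II,
or type III. -/
inductive GadgetAny (D : V → V → Prop) (b : ℕ) where
  | triv : TrivGadget D → GadgetAny D b
  | I : TypeIGadget D (4 * b ^ 2) → GadgetAny D b
  | II : BasicIIGadget D b → GadgetAny D b
  | IIext : ExtIIGadget D b → GadgetAny D b
  | III : TypeIIIGadget D b → GadgetAny D b

def GadgetAny.pp {D : V → V → Prop} {b : ℕ} : GadgetAny D b → V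
  | .triv G => G.p
  | .I G => G.p
  | .II G => G.p
  | .IIext G => G.p
  | .III G => G.p

def GadgetAny.qq {D : V → V → Prop} {b : ℕ} : GadgetAny D b → V
  | .triv G => G.q
  | .I G => G.q
  | .II G => G.q
  | .IIext G => G.q
  | .III G => G.q

def GadgetAny.verts {D : V → V → Prop} {b : ℕ} : GadgetAny D b → Set V
  | .triv G => G.verts
  | .I G => G.verts
  | .II G => G.verts
  | .IIext G => G.verts
  | .III G => G.verts

def GadgetAny.arcs {D : V → V → Prop} {b : ℕ} : GadgetAny D b → V → V → Prop
  | .triv G => G.arcs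
  | .I G => G.arcs
  | .II G => G.arcs
  | .IIext G => G.arcs
  | .III G => G.arcs

end Paper

/-!
Read the gadget as the single directed path `P₂ ++ P₁` (glued at `r`), starting at `z₀`, and
every vertex of `P₁` sending an arc to `q`. An alternating path with `a = 1` is a directed path
from `p`; one with `a = 2` and `s₁ = q` is a fork `x ⇇ s ⇉ q` of two directed paths meeting
only in `s`, the branch to `q` of length at least `b`.

A vertex `x` of `P₂` forks at itself, running along `P₂` and `P₁ - p` to `q`. For a set `X` of
inner vertices of `P₁` use the extra arc of the gadget. If it is `z₀ → v₁` (`v₁` the second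
vertex of `P₁`), fork at `z₀` to the first vertex of `X` on `P₁` and along `P₂` to `q`. If it is
`p → z₀`, go from `p` through `P₂` and `P₁` to the first vertex of `X`. If it is `w → z₀` with
`w` inner, fork at the last vertex of `X` up to `w` (continuing through `w → z₀` and `P₂` to
`q`), or, if there is none, fork at `w` to the first vertex of `X` after `w`. Taking first or
last vertices makes the path meet `X` only once, and part (1) at an inner vertex `x` of `P₁` is
the case `X = {x}`.
-/

theorem List.exists_split_at_first_mem {α : Type*} (X : Set α) :
    ∀ {l : List α}, (∃ x ∈ l, x ∈ X) →
      ∃ l₁ x l₂, l = l₁ ++ x :: l₂ ∧ x ∈ X ∧ ∀ y ∈ l₁, y ∉ X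
  | [], ⟨_, h, _⟩ => absurd h List.not_mem_nil
  | y :: l, h => by
    by_cases hy : y ∈ X
    · exact ⟨[], y, l, rfl, hy, by simp⟩
    · obtain ⟨l₁, x, l₂, rfl, hx, hl₁⟩ :=
        List.exists_split_at_first_mem X (by simpa [hy] using h)
      exact ⟨y :: l₁, x, l₂, rfl, hx, by simpa [hy] using hl₁⟩

theorem List.exists_split_at_last_mem {α : Type*} (X : Set α) {l : List α}
    (h : ∃ x ∈ l, x ∈ X) : ∃ l₁ x l₂, l = l₁ ++ x :: l₂ ∧ x ∈ X ∧ ∀ y ∈ l₂, y ∉ X := by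
  obtain ⟨l₁, x, l₂, hl, hx, hl₁⟩ :=
    List.exists_split_at_first_mem X (by simpa using h : ∃ x ∈ l.reverse, x ∈ X)
  exact ⟨l₂.reverse, x, l₁.reverse, by simpa using congrArg List.reverse hl, hx,
    by simpa using hl₁⟩

namespace Paper

variable {V : Type*} {A : V → V → Prop}

theorem isChain_adjIn (l : List V) : l.IsChain (adjIn l) := by
  induction l with
  | nil => exact .nil
  | cons x l ih =>
    refine (ih.imp fun y z ⟨l₁, l₂, h⟩ => ⟨x :: l₁, l₂, by simp [h]⟩).cons ?_
    intro y hy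
    obtain ⟨l', rfl⟩ : ∃ l', l = y :: l' := by cases l <;> simp_all
    exact ⟨[], l', rfl⟩

theorem IsDipathList.singleton (x : V) : IsDipathList A [x] :=
  ⟨List.cons_ne_nil _ _, List.nodup_singleton _, .singleton _⟩

theorem AltPath.exists_one_of_isDipathList (b : ℕ) {L : List V} {s x : V}
    (hL : IsDipathList A L) (hs : L.head? = some s) (hx : L.getLast? = some x) :
    ∃ R : AltPath A 1 b, R.s 0 = s ∧ R.t 0 = x ∧ ∀ z, z ∈ R.verts ↔ z ∈ L :=
  ⟨{ s := fun _ => s, t := fun _ => x, Q := fun _ => L, Q' := fun i => i.elim0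
     path_Q := fun _ => hL, first_Q := fun _ => hs, last_Q := fun _ => hx
     path_Q' := fun i => i.elim0, first_Q' := fun i => i.elim0, last_Q' := fun i => i.elim0
     len_Q := fun _ _ _ => by omega, len_Q' := fun i => i.elim0
     disj_QQ := fun i j hij => absurd (Subsingleton.elim i j) hij
     disj_Q'Q' := fun i => i.elim0, disj_QQ' := fun _ j => j.elim0 },
    rfl, rfl, fun z => by simp [AltPath.verts]⟩

/-- The fork `x ⇇ s ⇉ q` along `L` and `L'`, completed by the trivial path `Q 0 = [q]`. -/
theorem AltPath.exists_two_of_fork (b : ℕ) {L L' : List V} {s x q : V}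
    (hL : IsDipathList A L) (hL' : IsDipathList A L')
    (hLs : L.head? = some s) (hL's : L'.head? = some s)
    (hLx : L.getLast? = some x) (hL'q : L'.getLast? = some q)
    (hq : q ∉ L) (hlen : b + 1 ≤ L'.length) (hLL' : ∀ y ∈ L, y ∈ L' → y = s) :
    ∃ R : AltPath A 2 b, R.s 0 = q ∧ R.t 1 = x ∧ ∀ z, z ∈ R.verts ↔ z ∈ L ∨ z ∈ L' := by
  refine ⟨{ s := ![q, s], t := ![q, x], Q := ![[q], L], Q' := ![L']
            path_Q := Fin.forall_fin_two.2 ⟨.singleton q, hL⟩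
            first_Q := Fin.forall_fin_two.2 ⟨rfl, hLs⟩
            last_Q := Fin.forall_fin_two.2 ⟨rfl, hLx⟩
            path_Q' := Fin.forall_fin_one.2 hL'
            first_Q' := Fin.forall_fin_one.2 hL's
            last_Q' := Fin.forall_fin_one.2 hL'q
            len_Q := fun _ _ _ => by omega
            len_Q' := Fin.forall_fin_one.2 hlen
            disj_QQ := ?_
            disj_Q'Q' := fun i j hij => absurd (Subsingleton.elim (α := Fin 1) i j) hij
            disj_QQ' := ?_ }, rfl, rfl, ?_⟩
  · simp only [Fin.forall_fin_two]
    simp [hq]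
    exact fun y hy h => hq (h ▸ hy)
  · intro i j y hyQ hyQ'
    obtain rfl : j = 0 := Subsingleton.elim (α := Fin 1) j 0
    fin_cases i
    · exact .inl ⟨rfl, by simpa using hyQ⟩
    · exact .inr ⟨rfl, hLL' y hyQ hyQ'⟩
  · have hqL' : q ∈ L' := List.mem_of_getLast? hL'q
    intro z
    simp only [AltPath.verts, Fin.exists_fin_two]
    rcases eq_or_ne z q with rfl | hz
    · simp [hqL']
    · simp [hz]

/-- Some `(a, b)`-alternating path with `a ≤ 2` starts (with `s₁`) at one of `p, q`, avoids the
other one, and meets `X` exactly in its last sink `t_a`. -/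
def AltReaches (A : V → V → Prop) (b : ℕ) (p q : V) (X : Set V) : Prop :=
  ∃ (a : ℕ) (ha : 0 < a), a ≤ 2 ∧ ∃ R : AltPath A a b,
    R.t ⟨a - 1, by omega⟩ ∈ X ∧
    (R.s ⟨0, ha⟩ = p ∨ R.s ⟨0, ha⟩ = q) ∧
    (∀ z ∈ R.verts, z = p ∨ z = q → z = R.s ⟨0, ha⟩) ∧
    (∀ z ∈ R.verts, z ∈ X → z = R.t ⟨a - 1, by omega⟩)

section AltReaches

variable {b : ℕ} {p q x : V} {X : Set V}

theorem altReaches_of_isDipathList {L : List V} (hL : IsDipathList A L)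
    (hp : L.head? = some p) (hx : L.getLast? = some x) (hxX : x ∈ X) (hq : q ∉ L)
    (hX : ∀ z ∈ L, z ∈ X → z = x) : AltReaches A b p q X := by
  obtain ⟨R, hRs, hRt, hR⟩ := AltPath.exists_one_of_isDipathList b hL hp hx
  refine ⟨1, one_pos, one_le_two, R, hRt ▸ hxX, .inl hRs, ?_, ?_⟩
  · rintro z hz (rfl | rfl)
    · exact hRs.symm
    · exact absurd ((hR z).1 hz) hq
  · intro z hz hzX
    exact hRt ▸ hX z ((hR z).1 hz) hzX

theorem altReaches_of_fork {L L' : List V} {s : V}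
    (hL : IsDipathList A L) (hL' : IsDipathList A L')
    (hLs : L.head? = some s) (hL's : L'.head? = some s)
    (hLx : L.getLast? = some x) (hL'q : L'.getLast? = some q)
    (hq : q ∉ L) (hlen : b + 1 ≤ L'.length) (hLL' : ∀ y ∈ L, y ∈ L' → y = s)
    (hxX : x ∈ X) (hp : p ∉ L ++ L') (hX : ∀ z ∈ L ++ L', z ∈ X → z = x) :
    AltReaches A b p q X := by
  obtain ⟨R, hRs, hRt, hR⟩ :=
    AltPath.exists_two_of_fork b hL hL' hLs hL's hLx hL'q hq hlen hLL'
  refine ⟨2, two_pos, le_rfl, R, hRt ▸ hxX, .inr hRs, ?_, ?_⟩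
  · rintro z hz (rfl | rfl)
    · exact absurd (List.mem_append.2 ((hR z).1 hz)) hp
    · exact hRs.symm
  · intro z hz hzX
    exact hRt ▸ hX z (List.mem_append.2 ((hR z).1 hz)) hzX

end AltReaches

/-- An extended type-II gadget read along `P₂ = z₀ :: Z ++ [r]` followed by
`P₁ = r :: U ++ [p]`; its extra arc is a separate hypothesis where it is needed. -/
structure TypeIILayout (A : V → V → Prop) (b : ℕ) (z₀ : V) (Z U : List V) (r p q : V) :
    Prop where
  nodup : (z₀ :: Z ++ r :: (U ++ [p, q])).Nodup
  isChain : (z₀ :: Z ++ r :: (U ++ [p])).IsChain A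
  arc_q : ∀ y ∈ r :: (U ++ [p]), A y q
  length_Z : b ≤ Z.length + 1
  length_U : b ≤ U.length + 1

namespace TypeIILayout

variable {b : ℕ} {z₀ r p q w : V} {Z U Ua Ub : List V} {X : Set V}

theorem isChain_P₂_q (hG : TypeIILayout A b z₀ Z U r p q) :
    (z₀ :: Z ++ [r, q]).IsChain A := by
  have h₁ : (z₀ :: Z ++ [r]).IsChain A := hG.isChain.prefix ⟨U ++ [p], by simp⟩
  have h₂ : ([r] ++ [q]).IsChain A := List.isChain_pair.2 (hG.arc_q r (by simp))
  simpa using h₁.append_overlap h₂ (by simp)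

theorem altReaches_of_mem_P₂ (hG : TypeIILayout A b z₀ Z U r p q) {x : V}
    (hx : x ∈ z₀ :: Z ++ [r]) : AltReaches A b p q {x} := by
  obtain ⟨Y₁, Y, hY, hYx⟩ : ∃ Y₁ Y, z₀ :: Z = Y₁ ++ Y ∧ (Y ++ [r]).head? = some x := by
    rcases List.mem_append.1 hx with hx | hx
    · obtain ⟨Y₁, Y₂, h⟩ := List.append_of_mem hx
      exact ⟨Y₁, x :: Y₂, h, rfl⟩
    · exact ⟨z₀ :: Z, [], by simp, by simpa [eq_comm] using hx⟩
  have hxY : x ∈ Y ++ [r] := List.mem_of_mem_head? hYx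
  have hchain : (Y ++ r :: U).IsChain A := hG.isChain.infix ⟨Y₁, [p], by simp [hY]⟩
  have hL' : (Y ++ r :: U ++ [q]).IsChain A :=
    hchain.append (.singleton q) fun y hy z hz => by
      obtain rfl : z = q := by simpa [eq_comm] using hz
      rw [List.getLast?_append_cons] at hy
      have hyU : y ∈ r :: U := List.mem_of_getLast? hy
      exact hG.arc_q y (by simp only [List.mem_cons, List.mem_append] at hyU ⊢; tauto)
  have h := hG.nodup
  rw [hY] at h
  simp only [List.nodup_cons, List.nodup_append, List.mem_append, List.mem_cons] at h
  refine altReaches_of_fork (L := [x]) (L' := Y ++ r :: U ++ [q]) (s := x)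
    (.singleton x) ⟨by simp, ?_, hL'⟩ rfl (by simpa using hYx) rfl
    (by simp [List.getLast?_cons]) ?_ (by simp; have := hG.length_U; omega) (by simp) rfl ?_
    (by simp)
  all_goals
    simp only [List.nodup_cons, List.nodup_append, List.mem_append, List.mem_cons] at hxY ⊢
  all_goals grind

theorem altReaches_of_isChain_cons (hG : TypeIILayout A b z₀ Z U r p q)
    (hA : (z₀ :: (U ++ [p])).IsChain A) (hXU : ∀ x ∈ X, x ∈ U) (hX : ∃ x ∈ U, x ∈ X) :
    AltReaches A b p q X := by
  obtain ⟨U₁, x, U₂, rfl, hx, hU₁⟩ := List.exists_split_at_first_mem X hX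
  have h := hG.nodup
  simp only [List.nodup_append, List.nodup_cons, List.mem_append, List.mem_cons] at h
  refine altReaches_of_fork (L := z₀ :: U₁ ++ [x]) (L' := z₀ :: Z ++ [r, q]) (s := z₀)
    ⟨by simp, ?_, hA.prefix ⟨U₂ ++ [p], by simp⟩⟩ ⟨by simp, ?_, hG.isChain_P₂_q⟩
    rfl rfl (by simp [List.getLast?_cons]) (by simp [List.getLast?_cons]) ?_
    (by simp; have := hG.length_Z; omega) ?_ hx ?_ ?_
  all_goals simp only [List.nodup_cons, List.nodup_append, List.mem_append, List.mem_cons]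
  all_goals grind

theorem altReaches_of_arc_p (hG : TypeIILayout A b z₀ Z U r p q) (hp : A p z₀)
    (hXU : ∀ x ∈ X, x ∈ U) (hX : ∃ x ∈ U, x ∈ X) : AltReaches A b p q X := by
  obtain ⟨U₁, x, U₂, rfl, hx, hU₁⟩ := List.exists_split_at_first_mem X hX
  have h := hG.nodup
  simp only [List.nodup_cons, List.nodup_append, List.mem_append, List.mem_cons] at h
  have hchain : (z₀ :: Z ++ r :: (U₁ ++ [x])).IsChain A :=
    hG.isChain.prefix ⟨U₂ ++ [p], by simp⟩
  refine altReaches_of_isDipathList (L := p :: z₀ :: Z ++ r :: (U₁ ++ [x]))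
    ⟨by simp, ?_, List.isChain_cons_cons.2 ⟨hp, by simpa using hchain⟩⟩ rfl
    (by simp [List.getLast?_cons]) hx ?_ ?_
  all_goals simp only [List.nodup_cons, List.nodup_append, List.mem_append, List.mem_cons]
  all_goals grind

theorem altReaches_of_arc_of_mem_prefix (hG : TypeIILayout A b z₀ Z (Ua ++ w :: Ub) r p q)
    (hwz : A w z₀) (hXU : ∀ x ∈ X, x ∈ Ua ++ w :: Ub) (hX : ∃ x ∈ Ua ++ [w], x ∈ X) :
    AltReaches A b p q X := by
  obtain ⟨S₁, x, S₂, hUa, hx, hS₂⟩ := List.exists_split_at_last_mem X hX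
  have hchain : (Ua ++ [w] ++ [z₀]).IsChain A :=
    (hG.isChain.infix ⟨z₀ :: Z ++ [r], Ub ++ [p], by simp⟩).append (.singleton z₀)
      (by simp [hwz])
  rw [hUa] at hchain
  have hP₂ : ([z₀] ++ (Z ++ [r, q])).IsChain A := by simpa using hG.isChain_P₂_q
  have hL' : (x :: S₂ ++ z₀ :: Z ++ [r, q]).IsChain A := by
    simpa using (hchain.suffix (l₁ := x :: S₂ ++ [z₀]) ⟨S₁, by simp⟩).append_overlap hP₂ (List.cons_ne_nil _ _)
  have hU : Ua ++ w :: Ub = S₁ ++ x :: S₂ ++ Ub := by simp [← hUa]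
  rw [hU] at hG hXU
  have h := hG.nodup
  simp only [List.nodup_cons, List.nodup_append, List.mem_append, List.mem_cons] at h
  refine altReaches_of_fork (L := [x]) (L' := x :: S₂ ++ z₀ :: Z ++ [r, q]) (s := x)
    (.singleton x) ⟨by simp, ?_, hL'⟩ rfl rfl rfl (by simp [List.getLast?_cons]) ?_
    (by simp; have := hG.length_Z; omega) ?_ hx ?_ ?_
  all_goals simp only [List.nodup_cons, List.nodup_append, List.mem_append, List.mem_cons]
  all_goals grind

theorem altReaches_of_arc_of_disjoint_prefix (hG : TypeIILayout A b z₀ Z (Ua ++ w :: Ub) r p q)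
    (hwz : A w z₀) (hXU : ∀ x ∈ X, x ∈ Ua ++ w :: Ub) (hXw : ∀ x ∈ Ua ++ [w], x ∉ X)
    (hX : ∃ x ∈ Ub, x ∈ X) :
    AltReaches A b p q X := by
  obtain ⟨T₁, x, T₂, rfl, hx, hT₁⟩ := List.exists_split_at_first_mem X hX
  have h := hG.nodup
  simp only [List.nodup_cons, List.nodup_append, List.mem_append, List.mem_cons] at h
  simp only [List.mem_append, List.mem_singleton] at hXw
  refine altReaches_of_fork (L := w :: T₁ ++ [x]) (L' := w :: z₀ :: Z ++ [r, q]) (s := w)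
    ⟨by simp, ?_, hG.isChain.infix ⟨z₀ :: Z ++ r :: Ua, T₂ ++ [p], by simp⟩⟩
    ⟨by simp, ?_, List.isChain_cons_cons.2 ⟨hwz, by simpa using hG.isChain_P₂_q⟩⟩ rfl rfl
    (by simp [List.getLast?_cons]) (by simp [List.getLast?_cons]) ?_
    (by simp; have := hG.length_Z; omega) ?_ hx ?_ ?_
  all_goals simp only [List.nodup_cons, List.nodup_append, List.mem_append, List.mem_cons]
  all_goals grind

theorem altReaches_of_subset (hG : TypeIILayout A b z₀ Z U r p q)
    (hext : (z₀ :: (U ++ [p])).IsChain A ∨ ∃ w ∈ U ++ [p], A w z₀)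
    (hXU : ∀ x ∈ X, x ∈ U) (hX : ∃ x ∈ U, x ∈ X) : AltReaches A b p q X := by
  rcases hext with hA | ⟨w, hw, hwz⟩
  · exact hG.altReaches_of_isChain_cons hA hXU hX
  rcases List.mem_append.1 hw with hw | hw
  · obtain ⟨Ua, Ub, rfl⟩ := List.append_of_mem hw
    by_cases hXw : ∃ x ∈ Ua ++ [w], x ∈ X
    · exact hG.altReaches_of_arc_of_mem_prefix hwz hXU hXw
    · simp only [not_exists, not_and] at hXw
      refine hG.altReaches_of_arc_of_disjoint_prefix hwz hXU hXw ?_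
      obtain ⟨x, hxU, hx⟩ := hX
      refine ⟨x, ?_, hx⟩
      simp only [List.mem_append, List.mem_cons] at hxU hXw
      grind
  · rw [List.mem_singleton.1 hw] at hwz
    exact hG.altReaches_of_arc_p hwz hXU hX

end TypeIILayout

theorem ExtIIGadget.exists_layout {D : V → V → Prop} {b : ℕ} (G : ExtIIGadget D b)
    (hb : 1 ≤ b) :
    ∃ z₀ Z U, TypeIILayout G.arcs b z₀ Z U G.r G.p G.q ∧
      G.P₁ = G.r :: (U ++ [G.p]) ∧ G.P₂ = z₀ :: Z ++ [G.r] ∧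
      ((z₀ :: (U ++ [G.p])).IsChain G.arcs ∨ ∃ w ∈ U ++ [G.p], G.arcs w z₀) := by
  have hb2 : b ≤ b ^ 2 := Nat.le_self_pow two_ne_zero b
  have hlen₁ := G.len₁
  have hlen₂ := G.len₂
  obtain ⟨T, hT⟩ := List.head?_eq_some_iff.1 G.first₁
  obtain ⟨U, rfl⟩ : ∃ U, T = U ++ [G.p] := by
    refine List.getLast?_eq_some_iff.1 ?_
    rw [← G.last₁, hT, List.getLast?_cons_of_ne_nil]
    rintro rfl
    simp [hT] at hlen₁
    omega
  obtain ⟨Y, hY⟩ := List.getLast?_eq_some_iff.1 G.last₂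
  obtain ⟨z₀, Z, rfl⟩ : ∃ z₀ Z, Y = z₀ :: Z := by
    refine List.exists_cons_of_ne_nil ?_
    rintro rfl
    simp [hY] at hlen₂
    omega
  have hP₁ : G.P₁.IsChain G.arcs := (isChain_adjIn _).imp fun _ _ h => Or.inl h
  have hP₂ : G.P₂.IsChain G.arcs :=
    (isChain_adjIn _).imp fun _ _ h => Or.inr (Or.inr (Or.inl h))
  rw [hT] at hP₁
  rw [hY] at hP₂
  refine ⟨z₀, Z, U, ⟨?_, ?_, ?_, ?_, ?_⟩, hT, hY, ?_⟩
  · have h₁ := G.path₁.2.1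
    have h₂ := G.path₂.2.1
    have hinter := G.inter
    have hq₁ := G.hq
    have hq₂ := G.hq₂
    rw [hT] at h₁ hinter hq₁
    rw [hY] at h₂ hinter hq₂
    simp only [List.nodup_cons, List.nodup_append, List.mem_append, List.mem_cons,
      List.cons_append] at h₁ h₂ hinter hq₁ hq₂ ⊢
    grind
  · simpa using hP₂.append_overlap (l₂ := [G.r]) (by simpa using hP₁) (by simp)
  · exact fun y hy => Or.inr (Or.inl ⟨hT ▸ hy, rfl⟩)
  · simp [hY] at hlen₂
    omega
  · simp [hT] at hlen₁
    omega
  · rcases G.extra with ⟨z, y, hz, hy, hD⟩ | ⟨w, z, hw, hwr, hz, hD⟩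
    · left
      obtain rfl : z₀ = z := by simpa [hY] using hz
      refine List.isChain_cons.2 ⟨fun y' hy' => ?_, by simpa using hP₁.tail⟩
      obtain rfl : y' = y := by
        rw [hT, List.getElem?_cons_succ, ← List.head?_eq_getElem?, Option.mem_def.1 hy'] at hy
        exact Option.some.inj hy
      exact Or.inr (Or.inr (Or.inr ⟨hD, Or.inl ⟨hz, hy⟩⟩))
    · right
      obtain rfl : z₀ = z := by simpa [hY] using hz
      refine ⟨w, ?_, Or.inr (Or.inr (Or.inr ⟨hD, Or.inr ⟨hw, hwr, hz⟩⟩))⟩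
      rw [hT, List.mem_cons] at hw
      exact hw.resolve_left hwr

end Paper

namespace Paper

/-- Let `G` be an extended type-II gadget. (1) For every vertex
`x ∈ V(G) \ {p,q}` there are `a ∈ {1,2}` and an `(a,b)`-alternating path `R` in `G`
with `t_a(R) = x`, `s_1(R) ∈ {p,q}` and `|V(R) ∩ {p,q}| = 1`. (2) For every nonempty
`X ⊆ V(P₁) \ {p,r}` there are `a ∈ {1,2}` and an `(a,b)`-alternating path `R` in `G`
with `t_a(R) ∈ X`, `s_1(R) ∈ {p,q}`, `|V(R) ∩ {p,q}| = 1` and `|V(R) ∩ X| = 1`. -/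
theorem stmt_9 {V : Type*} (D : V → V → Prop)
    (b : ℕ) (hb : 1 ≤ b) (G : ExtIIGadget D b) :
    (∀ x, x ∈ G.verts → x ≠ G.p → x ≠ G.q →
      ∃ (a : ℕ) (ha : 0 < a), a ≤ 2 ∧
        ∃ R : AltPath G.arcs a b,
          R.t ⟨a - 1, by omega⟩ = x ∧
          (R.s ⟨0, ha⟩ = G.p ∨ R.s ⟨0, ha⟩ = G.q) ∧
          (∀ z ∈ R.verts, z = G.p ∨ z = G.q → z = R.s ⟨0, ha⟩)) ∧
    (∀ X : Set V, X.Nonempty → (∀ x ∈ X, x ∈ G.P₁ ∧ x ≠ G.p ∧ x ≠ G.r) →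
      ∃ (a : ℕ) (ha : 0 < a), a ≤ 2 ∧
        ∃ R : AltPath G.arcs a b,
          R.t ⟨a - 1, by omega⟩ ∈ X ∧
          (R.s ⟨0, ha⟩ = G.p ∨ R.s ⟨0, ha⟩ = G.q) ∧
          (∀ z ∈ R.verts, z = G.p ∨ z = G.q → z = R.s ⟨0, ha⟩) ∧
          (∀ z ∈ R.verts, z ∈ X → z = R.t ⟨a - 1, by omega⟩)) := by
  obtain ⟨z₀, Z, U, hG, hP₁, hP₂, hext⟩ := G.exists_layout hb
  have hU : ∀ x ∈ G.P₁, x ≠ G.p → x ≠ G.r → x ∈ U := by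
    intro x hx hxp hxr
    simpa [hP₁, hxp, hxr] using hx
  refine ⟨fun x hx hxp hxq => ?_, fun X ⟨x, hx⟩ hX =>
    hG.altReaches_of_subset hext (fun y hy => hU y (hX y hy).1 (hX y hy).2.1 (hX y hy).2.2)
      ⟨x, hU x (hX x hx).1 (hX x hx).2.1 (hX x hx).2.2, hx⟩⟩
  suffices h : AltReaches G.arcs b G.p G.q {x} by
    obtain ⟨a, ha, ha2, R, ht, hs, hpq, -⟩ := h
    exact ⟨a, ha, ha2, R, ht, hs, hpq⟩
  rcases hx with rfl | hx | hx
  · exact absurd rfl hxq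
  · by_cases hxr : x = G.r
    · exact hG.altReaches_of_mem_P₂ (by simp [hxr])
    · have hxU := hU x hx hxp hxr
      exact hG.altReaches_of_subset hext (by simpa using hxU) ⟨x, hxU, rfl⟩
  · exact hG.altReaches_of_mem_P₂ (hP₂ ▸ hx)

end Paper
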